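/- In the layered graph G'(G,k,v), every vertex can reach every vertex by a directed walk if and only if G contains a closed directed walk of length exactly k from v to v. -/
import Mathlib

/-!
Correctness of the `k`-Cycle lower-bound construction (Theorem 3.9): in the layered
graph `G'(G,k,v)`, every vertex can reach every vertex by a directed walk if and only
if `G` contains a closed directed walk of length exactly `k` from `v` to `v`.
-/

/-- `DiWalk E k p q` : there is a directed walk of length `k` from `p` to `q`
in the digraph with edge relation `E`. -/
def DiWalk {V : Type*} (E : V → V → Prop) (k : ℕ) (p q : V) : Prop :=
  ∃ f : ℕ → V, f 0 = p ∧ f k = q ∧ ∀ i < k, E (f i) (f (i + 1))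

/-- Vertices of the layered graph `G'(G,k,v)`: two families of `k+1` copies of `V`
(left and right), plus the three extra vertices `s`, `t_left`, `t_right`. -/
inductive LVert (V : Type*) (k : ℕ) : Type _
  | left (i : Fin (k + 1)) (z : V)
  | right (i : Fin (k + 1)) (z : V)
  | s
  | tl
  | tr

/-- Edges of the layered graph `G'(G,k,v)` built from the digraph `(V,E)`,
the parameter `k` and the vertex `v`. -/
def LEdge {V : Type*} (E : V → V → Prop) (k : ℕ) (v : V) :
    LVert V k → LVert V k → Prop := fun p q =>
  (∃ (u z : V) (i : ℕ) (h : i < k), E u z ∧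
      ((p = .left ⟨i, Nat.lt_succ_of_lt h⟩ u ∧ q = .left ⟨i + 1, Nat.succ_lt_succ h⟩ z) ∨
       (p = .right ⟨i, Nat.lt_succ_of_lt h⟩ u ∧ q = .right ⟨i + 1, Nat.succ_lt_succ h⟩ z))) ∨
  (∃ (z : V) (i : Fin (k + 1)), p = .tl ∧ q = .left i z) ∨
  (∃ (z : V) (i : Fin (k + 1)), p = .left i z ∧ q = .s) ∨
  (∃ (z : V) (i : Fin (k + 1)), p = .tr ∧ q = .right i z) ∨
  (∃ (z : V) (i : Fin (k + 1)), p = .right i z ∧ q = .s) ∨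
  (p = .s ∧ q = .left 0 v) ∨
  (p = .s ∧ q = .right 0 v) ∨
  (p = .left (Fin.last k) v ∧ q = .tl) ∨
  (p = .right (Fin.last k) v ∧ q = .tr)

section Helpers

variable {V : Type*} {E : V → V → Prop}

lemma diwalk_zero (E : V → V → Prop) (p : V) : DiWalk E 0 p p :=
  ⟨fun _ => p, rfl, rfl, fun i h => absurd h (Nat.not_lt_zero i)⟩

lemma diwalk_single {p q : V} (h : E p q) : DiWalk E 1 p q := by
  refine ⟨fun i => if i = 0 then p else q, by simp, by simp, ?_⟩
  intro i hi
  interval_cases i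
  simpa using h

lemma diwalk_snoc {n : ℕ} {p q r : V} (h : DiWalk E n p q) (he : E q r) :
    DiWalk E (n + 1) p r := by
  obtain ⟨f, h0, hn, hs⟩ := h
  refine ⟨fun i => if i ≤ n then f i else r, by simp [h0], by simp, ?_⟩
  intro i hi
  simp only []
  rcases Nat.lt_succ_iff_lt_or_eq.mp hi with h' | rfl
  · rw [if_pos h'.le, if_pos (show i + 1 ≤ n from h')]
    exact hs i h'
  · rw [if_pos le_rfl, if_neg (by omega), hn]
    exact he

lemma diwalk_succ {n : ℕ} {p r : V} (h : DiWalk E (n + 1) p r) :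
    ∃ q, DiWalk E n p q ∧ E q r := by
  obtain ⟨f, h0, hn, hs⟩ := h
  exact ⟨f n, ⟨f, h0, rfl, fun i hi => hs i (hi.trans (Nat.lt_succ_self n))⟩,
    hn ▸ hs n (Nat.lt_succ_self n)⟩

lemma diwalk_append {m n : ℕ} {p q r : V} (h1 : DiWalk E m p q)
    (h2 : DiWalk E n q r) : DiWalk E (m + n) p r := by
  induction n generalizing r with
  | zero => obtain ⟨g, hg0, hgn, -⟩ := h2; exact (hg0 ▸ hgn : q = r) ▸ h1
  | succ n ih =>
    obtain ⟨q', hw, he⟩ := diwalk_succ h2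
    exact diwalk_snoc (ih hw) he

variable {k : ℕ} {v : V}

/-- From `s` we can reach every left-layer copy of `w j` along a closed walk `w`. -/
lemma spine_left (w : ℕ → V) (hw0 : w 0 = v) (hwE : ∀ i < k, E (w i) (w (i + 1)))
    (j : ℕ) (hj : j ≤ k) :
    DiWalk (LEdge E k v) (j + 1) .s (.left ⟨j, Nat.lt_succ_of_le hj⟩ (w j)) := by
  induction j with
  | zero =>
    have : (LVert.left 0 v : LVert V k) = .left ⟨0, Nat.lt_succ_of_le hj⟩ (w 0) := by
      rw [hw0]; congr 1
    exact this ▸ diwalk_single (Or.inr (Or.inr (Or.inr (Or.inr (Or.inr (Or.inl ⟨rfl, rfl⟩))))))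
  | succ j ih =>
    have hjk : j < k := hj
    refine diwalk_snoc (ih hjk.le) (Or.inl ⟨w j, w (j + 1), j, hjk, hwE j hjk, Or.inl ⟨rfl, rfl⟩⟩)

lemma spine_right (w : ℕ → V) (hw0 : w 0 = v) (hwE : ∀ i < k, E (w i) (w (i + 1)))
    (j : ℕ) (hj : j ≤ k) :
    DiWalk (LEdge E k v) (j + 1) .s (.right ⟨j, Nat.lt_succ_of_le hj⟩ (w j)) := by
  induction j with
  | zero =>
    have : (LVert.right 0 v : LVert V k) = .right ⟨0, Nat.lt_succ_of_le hj⟩ (w 0) := by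
      rw [hw0]; congr 1
    exact this ▸ diwalk_single
      (Or.inr (Or.inr (Or.inr (Or.inr (Or.inr (Or.inr (Or.inl ⟨rfl, rfl⟩)))))))
  | succ j ih =>
    have hjk : j < k := hj
    refine diwalk_snoc (ih hjk.le)
      (Or.inl ⟨w j, w (j + 1), j, hjk, hwE j hjk, Or.inr ⟨rfl, rfl⟩⟩)

lemma s_reach_tl (hw : DiWalk E k v v) :
    DiWalk (LEdge E k v) (k + 2) (.s : LVert V k) .tl := by
  obtain ⟨w, hw0, hwk, hwE⟩ := hw
  have h1 := spine_left (v := v) w hw0 hwE k le_rfl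
  have he : LEdge E k v (.left ⟨k, Nat.lt_succ_of_le le_rfl⟩ (w k)) .tl := by
    refine Or.inr (Or.inr (Or.inr (Or.inr (Or.inr (Or.inr (Or.inr (Or.inl ⟨?_, rfl⟩))))))) 
    rw [hwk]; rfl
  exact diwalk_snoc h1 he

lemma s_reach_tr (hw : DiWalk E k v v) :
    DiWalk (LEdge E k v) (k + 2) (.s : LVert V k) .tr := by
  obtain ⟨w, hw0, hwk, hwE⟩ := hw
  have h1 := spine_right (v := v) w hw0 hwE k le_rfl
  have he : LEdge E k v (.right ⟨k, Nat.lt_succ_of_le le_rfl⟩ (w k)) .tr := by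
    refine Or.inr (Or.inr (Or.inr (Or.inr (Or.inr (Or.inr (Or.inr (Or.inr ⟨?_, rfl⟩)))))))
    rw [hwk]; rfl
  exact diwalk_snoc h1 he

lemma s_reach (hw : DiWalk E k v v) (q : LVert V k) :
    ∃ n, DiWalk (LEdge E k v) n .s q := by
  cases q with
  | s => exact ⟨0, diwalk_zero _ _⟩
  | tl => exact ⟨k + 2, s_reach_tl hw⟩
  | tr => exact ⟨k + 2, s_reach_tr hw⟩
  | left i z =>
    exact ⟨k + 3, diwalk_snoc (s_reach_tl hw) (Or.inr (Or.inl ⟨z, i, rfl, rfl⟩))⟩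
  | right i z =>
    exact ⟨k + 3, diwalk_snoc (s_reach_tr hw)
      (Or.inr (Or.inr (Or.inr (Or.inl ⟨z, i, rfl, rfl⟩))))⟩

lemma reach_s (p : LVert V k) : ∃ n, DiWalk (LEdge E k v) n p .s := by
  have hls : ∀ (i : Fin (k + 1)) (z : V), LEdge E k v (.left i z) .s :=
    fun i z => Or.inr (Or.inr (Or.inl ⟨z, i, rfl, rfl⟩))
  have hrs : ∀ (i : Fin (k + 1)) (z : V), LEdge E k v (.right i z) .s :=
    fun i z => Or.inr (Or.inr (Or.inr (Or.inr (Or.inl ⟨z, i, rfl, rfl⟩))))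
  cases p with
  | s =>
    exact ⟨2, diwalk_snoc (diwalk_single
      (Or.inr (Or.inr (Or.inr (Or.inr (Or.inr (Or.inl ⟨rfl, rfl⟩))))))) (hls 0 v)⟩
  | tl =>
    exact ⟨2, diwalk_snoc (diwalk_single (Or.inr (Or.inl ⟨v, 0, rfl, rfl⟩))) (hls 0 v)⟩
  | tr =>
    exact ⟨2, diwalk_snoc (diwalk_single
      (Or.inr (Or.inr (Or.inr (Or.inl ⟨v, 0, rfl, rfl⟩))))) (hrs 0 v)⟩
  | left i z => exact ⟨1, diwalk_single (hls i z)⟩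
  | right i z => exact ⟨1, diwalk_single (hrs i z)⟩


lemma edge_into_tl {p : LVert V k} (h : LEdge E k v p .tl) :
    p = .left (Fin.last k) v := by
  rcases h with ⟨u,z,i,hik,he,(⟨hp,hq⟩|⟨hp,hq⟩)⟩|⟨z,i,hp,hq⟩|⟨z,i,hp,hq⟩|⟨z,i,hp,hq⟩|
    ⟨z,i,hp,hq⟩|⟨hp,hq⟩|⟨hp,hq⟩|⟨hp,hq⟩|⟨hp,hq⟩ <;>
    first | exact hp | simp at hq

lemma edge_into_left {p : LVert V k} {fi : Fin (k + 1)} {z : V}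
    (h : LEdge E k v p (.left fi z)) :
    p = .tl ∨ ((fi : ℕ) = 0 ∧ p = .s ∧ z = v) ∨
      ∃ (u : V) (fj : Fin (k + 1)), E u z ∧ (fj : ℕ) + 1 = (fi : ℕ) ∧ p = .left fj u := by
  rcases h with ⟨u,z',i,hik,he,(⟨hp,hq⟩|⟨hp,hq⟩)⟩|⟨z',i,hp,hq⟩|⟨z',i,hp,hq⟩|⟨z',i,hp,hq⟩|
    ⟨z',i,hp,hq⟩|⟨hp,hq⟩|⟨hp,hq⟩|⟨hp,hq⟩|⟨hp,hq⟩
  · rw [LVert.left.injEq] at hq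
    obtain ⟨hfi, hz⟩ := hq
    exact Or.inr (Or.inr ⟨u, ⟨i, Nat.lt_succ_of_lt hik⟩, hz ▸ he, by rw [hfi], hp⟩)
  · simp at hq
  · exact Or.inl hp
  · simp at hq
  · simp at hq
  · simp at hq
  · rw [LVert.left.injEq] at hq
    exact Or.inr (Or.inl ⟨by rw [hq.1]; rfl, hp, hq.2⟩)
  · simp at hq
  · simp at hq
  · simp at hq

lemma extract_walk (hk : 1 ≤ k) {n : ℕ} {f : ℕ → LVert V k}
    (h0 : f 0 = .s) (hn : f n = .tl) (hE : ∀ i < n, LEdge E k v (f i) (f (i + 1))) :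
    DiWalk E k v v := by
  classical
  have hex : ∃ j, f j = LVert.tl := ⟨n, hn⟩
  set j := Nat.find hex with hjdef
  have hj : f j = .tl := Nat.find_spec hex
  have hmin : ∀ m, m < j → f m ≠ .tl := fun m hm => Nat.find_min hex hm
  have hjn : j ≤ n := Nat.find_min' hex hn
  have hj1 : 1 ≤ j := by
    rcases Nat.eq_zero_or_pos j with h' | h'
    · rw [h', h0] at hj; simp at hj
    · exact h'
  have key : ∀ t, t ≤ k → ∃ (g : ℕ → V) (fi : Fin (k + 1)), t + 1 ≤ j ∧
      (fi : ℕ) = k - t ∧ f (j - 1 - t) = .left fi (g 0) ∧ g t = v ∧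
      ∀ i < t, E (g i) (g (i + 1)) := by
    intro t
    induction t with
    | zero =>
      intro _
      have he := hE (j - 1) (by omega)
      rw [show j - 1 + 1 = j from by omega, hj] at he
      have hp := edge_into_tl he
      exact ⟨fun _ => v, Fin.last k, hj1, by simp [Fin.last], by simpa using hp, rfl,
        fun i hi => absurd hi (Nat.not_lt_zero i)⟩
    | succ t ih =>
      intro ht
      obtain ⟨g, fi, hjt, hval, hf, hgv, hge⟩ := ih (by omega)
      have ht2 : t + 2 ≤ j := by
        by_contra hc
        have hz : j - 1 - t = 0 := by omega
        rw [hz, h0] at hf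
        simp at hf
      have he := hE (j - 2 - t) (by omega)
      rw [show j - 2 - t + 1 = j - 1 - t from by omega, hf] at he
      rcases edge_into_left he with hp | ⟨h0', _, _⟩ | ⟨u, fj, heu, hval', hp⟩
      · exact absurd hp (hmin _ (by omega))
      · omega
      · refine ⟨fun m => if m = 0 then u else g (m - 1), fj, ht2, by omega, ?_, ?_, ?_⟩
        · rw [show j - 1 - (t + 1) = j - 2 - t from by omega, hp]
          norm_num
        · simp [hgv]
        · intro i hi
          rcases Nat.eq_zero_or_pos i with rfl | hpos
          · norm_num
            exact heu
          · have : i - 1 < t := by omega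
            have := hge (i - 1) this
            simp only [if_neg (by omega : ¬ i = 0), if_neg (by omega : ¬ i + 1 = 0)]
            rw [show i - 1 + 1 = i from by omega] at this
            exact this
  obtain ⟨g, fi, hjk, hval, hf, hgk, hge⟩ := key k le_rfl
  have hfi0 : (fi : ℕ) = 0 := by omega
  have ht2 : k + 2 ≤ j := by
    by_contra hc
    have hz : j - 1 - k = 0 := by omega
    rw [hz, h0] at hf
    simp at hf
  have he := hE (j - 2 - k) (by omega)
  rw [show j - 2 - k + 1 = j - 1 - k from by omega, hf] at he
  rcases edge_into_left he with hp | ⟨_, _, hzv⟩ | ⟨u, fj, heu, hval', hp⟩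
  · exact absurd hp (hmin _ (by omega))
  · exact ⟨g, hzv, hgk, hge⟩
  · omega

end Helpers

theorem layered_graph_reachability {V : Type*} [Fintype V]
    (E : V → V → Prop) (k : ℕ) (hk : 1 ≤ k) (v : V) :
    (∀ p q : LVert V k, ∃ n : ℕ, DiWalk (LEdge E k v) n p q) ↔
      DiWalk E k v v := by
  constructor
  · intro h
    obtain ⟨n, f, h0, hn, hE⟩ := h .s .tl
    exact extract_walk hk h0 hn hE
  · intro hw p q
    obtain ⟨a, ha⟩ := reach_s (E := E) (v := v) p
    obtain ⟨b, hb⟩ := s_reach hw q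
    exact ⟨a + b, diwalk_append ha hb⟩
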